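/- Let M be a model of PA, let X be a neutral subset of M, and let N be a superminimal elementary extension of M. If Y ⊆ N is such that (M, X) ≺ (N, Y), then Y is a neutral subset of N. -/

import Mathlib

open FirstOrder Language

namespace NeutralPA

/-- The function symbols of the language of arithmetic: `0`, `1`, `+`, `·`. -/
inductive ArithFunc : ℕ → Type
  | zero : ArithFunc 0
  | one : ArithFunc 0
  | add : ArithFunc 2
  | mul : ArithFunc 2

/-- The relation symbols of the language of arithmetic: `<`. -/
inductive ArithRel : ℕ → Type
  | lt : ArithRel 2

/-- The first-order language of arithmetic `{0, 1, +, ·, <}`. -/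
@[reducible] def arith : Language := ⟨ArithFunc, ArithRel⟩

/-- The relation symbols of the language with a single unary predicate `X`. -/
inductive XRel : ℕ → Type
  | mem : XRel 1

/-- The language consisting of a single unary predicate symbol `X`. -/
@[reducible] def xLang : Language := ⟨fun _ => Empty, XRel⟩

/-- The language of arithmetic together with a unary predicate symbol `X`. -/
@[reducible] def xArith : Language := arith.sum xLang

section Defs

variable {M : Type*} [arith.Structure M]

/-- Expansion of a model of arithmetic by a unary predicate interpreted as `X`. -/
def withX (X : Set M) : xArith.Structure M where
  funMap := fun {n} f v => match f with
    | Sum.inl g => Structure.funMap g v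
    | Sum.inr g => g.elim
  RelMap := fun {n} r v => match n, r, v with
    | _, Sum.inl r, v => Structure.RelMap r v
    | _, Sum.inr XRel.mem, v => v 0 ∈ X

/-- The definable closure of a single element `a` in an `L`-structure `M`:
the set of all `b` that are the unique solution of some `L`-formula `φ(a, y)`. -/
def dcl (L : Language) {M : Type*} [L.Structure M] (a : M) : Set M :=
  { b | ∃ φ : L.Formula (Fin 2), ∀ y : M, φ.Realize ![a, y] ↔ y = b }

/-- The definable closure of `a` in the expanded structure `(M, X)`. -/
def dclX (X : Set M) (a : M) : Set M :=
  @dcl xArith M (withX X) a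

/-- A subset `X ⊆ M` is neutral if it does not change the definable closure relation. -/
def Neutral (X : Set M) : Prop :=
  ∀ a : M, dcl arith a = dclX X a

/-- A subset of `M` is definable (with parameters) in the `L`-structure `M`. -/
def DefinableP (L : Language) {M : Type*} [L.Structure M] (s : Set M) : Prop :=
  ∃ (n : ℕ) (φ : L.Formula (Fin n ⊕ Fin 1)) (p : Fin n → M),
    ∀ x : M, x ∈ s ↔ φ.Realize (Sum.elim p ![x])

/-- A subset of `M` is definable without parameters in the `L`-structure `M`. -/
def Definable0 (L : Language) {M : Type*} [L.Structure M] (s : Set M) : Prop :=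
  ∃ φ : L.Formula (Fin 1), ∀ x : M, x ∈ s ↔ φ.Realize ![x]

/-- Semantic interpretations of the arithmetic symbols. -/
def m0 : M := @Structure.funMap arith M _ 0 ArithFunc.zero ![]

def m1 : M := @Structure.funMap arith M _ 0 ArithFunc.one ![]

def madd (a b : M) : M := @Structure.funMap arith M _ 2 ArithFunc.add ![a, b]

def mmul (a b : M) : M := @Structure.funMap arith M _ 2 ArithFunc.mul ![a, b]

def mlt (a b : M) : Prop := @Structure.RelMap arith M _ 2 ArithRel.lt ![a, b]

def mle (a b : M) : Prop := mlt a b ∨ a = b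

/-- The standard numerals in a model of arithmetic. -/
def num : ℕ → M
  | 0 => m0
  | n + 1 => madd (num n) m1

/-- `X` is a class of `M`: every initial-segment restriction is definable with parameters. -/
def IsClass (X : Set M) : Prop :=
  ∀ a : M, DefinableP arith { x | x ∈ X ∧ mlt x a }

end Defs

section PA

variable (L : Language)

/-- The term given by a constant symbol. -/
def cT (c : L.Functions 0) {α : Type} : L.Term α := Term.func c ![]

/-- The term given by a binary function symbol. -/
def b2T (f : L.Functions 2) {α : Type} (t u : L.Term α) : L.Term α := Term.func f ![t, u]

/-- The atomic bounded formula given by a binary relation symbol. -/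
def r2F (r : L.Relations 2) {α : Type} {n : ℕ} (t u : L.Term (α ⊕ Fin n)) :
    L.BoundedFormula α n := BoundedFormula.rel r ![t, u]

variable {L}

/-- The `i`-th bound variable, as a term. -/
def bv {n : ℕ} (i : Fin n) : L.Term (Empty ⊕ Fin n) := Term.var (Sum.inr i)

/-- Universal quantification over all the variables indexed by `Fin n`. -/
def iAllsn {α : Type} {n : ℕ} (φ : L.Formula (α ⊕ Fin n)) : L.Formula α :=
  (BoundedFormula.relabel id φ).alls

variable (L)

/-- The finitely many base axioms of `PA`, for an arbitrary language equipped with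
symbols `0`, `1`, `+`, `·`, `<`. -/
def paBase (z o : L.Functions 0) (pl ml : L.Functions 2) (lt : L.Relations 2) : L.Theory :=
  let zt : ∀ {n : ℕ}, L.Term (Empty ⊕ Fin n) := cT L z
  let ot : ∀ {n : ℕ}, L.Term (Empty ⊕ Fin n) := cT L o
  let A1 : L.BoundedFormula Empty 1 := ∼((b2T L pl (bv 0) ot).bdEqual zt)
  let A2 : L.BoundedFormula Empty 2 :=
    ((b2T L pl (bv 0) ot).bdEqual (b2T L pl (bv 1) ot)).imp ((bv 0).bdEqual (bv 1))
  let A3 : L.BoundedFormula Empty 1 := (b2T L pl (bv 0) zt).bdEqual (bv 0)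
  let A4 : L.BoundedFormula Empty 2 :=
    (b2T L pl (bv 0) (b2T L pl (bv 1) ot)).bdEqual (b2T L pl (b2T L pl (bv 0) (bv 1)) ot)
  let A5 : L.BoundedFormula Empty 1 := (b2T L ml (bv 0) zt).bdEqual zt
  let A6 : L.BoundedFormula Empty 2 :=
    (b2T L ml (bv 0) (b2T L pl (bv 1) ot)).bdEqual (b2T L pl (b2T L ml (bv 0) (bv 1)) (bv 0))
  let A7body : L.BoundedFormula Empty 3 :=
    (b2T L pl (b2T L pl (bv 2) (bv 0)) ot).bdEqual (bv 1)
  let A7 : L.BoundedFormula Empty 2 := (r2F L lt (bv 0) (bv 1)).iff A7body.ex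
  {A1.all, A2.all.all, A3.all, A4.all.all, A5.all, A6.all.all, A7.all.all}

/-- The induction axiom for a formula `φ(y₁, …, yₘ, x)`, where `x` (the `Sum.inr`
coordinate) is the induction variable and the `yᵢ` are parameters. -/
def indAx (z o : L.Functions 0) (pl : L.Functions 2) {m : ℕ}
    (φ : L.Formula (Fin m ⊕ Fin 1)) : L.Sentence :=
  let zt : L.Term (Fin m) := cT L z
  let phi0 : L.Formula (Fin m) := φ.subst (Sum.elim Term.var fun _ => zt)
  let succ : L.Term (Fin m ⊕ Fin 1) :=
    b2T L pl (Term.var (Sum.inr 0)) (cT L o)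
  let phiS : L.Formula (Fin m ⊕ Fin 1) :=
    φ.subst (Sum.elim (fun i => Term.var (Sum.inl i)) fun _ => succ)
  let step : L.Formula (Fin m) := iAllsn (φ.imp phiS)
  let concl : L.Formula (Fin m) := iAllsn φ
  iAllsn ((phi0.imp (step.imp concl)).relabel Sum.inr)

/-- Peano Arithmetic in a language equipped with symbols `0`, `1`, `+`, `·`, `<`:
the base axioms together with the induction scheme for all formulas of the language. -/
def paScheme (z o : L.Functions 0) (pl ml : L.Functions 2) (lt : L.Relations 2) : L.Theory :=
  paBase L z o pl ml lt ∪ ⋃ m : ℕ, Set.range fun φ : L.Formula (Fin m ⊕ Fin 1) => indAx L z o pl φ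

end PA

/-- The theory `PA` in the language of arithmetic. -/
def paT : arith.Theory :=
  paScheme arith ArithFunc.zero ArithFunc.one ArithFunc.add ArithFunc.mul ArithRel.lt

/-- The theory `PA*`: Peano arithmetic, with induction for all formulas in the language
of arithmetic expanded by a unary predicate. -/
def paStarT : xArith.Theory :=
  paScheme xArith (Sum.inl ArithFunc.zero) (Sum.inl ArithFunc.one) (Sum.inl ArithFunc.add)
    (Sum.inl ArithFunc.mul) (Sum.inl ArithRel.lt)

/-- `M`, with a given `L`-structure, is a model of the theory `T`. -/
def ModelOf (L : Language) (M : Type*) [L.Structure M] (T : L.Theory) : Prop :=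
  ∀ φ ∈ T, M ⊨ φ

section MDefs

variable {M : Type*} [arith.Structure M]

/-- `X ⊆ M` is inductive: the expansion `(M, X)` satisfies `PA*`. -/
def IndSet (X : Set M) : Prop :=
  @ModelOf xArith M (withX X) paStarT

/-- `M` is a prime model: every element is definable without parameters. -/
def IsPrimeM (M : Type*) [arith.Structure M] : Prop :=
  ∀ a : M, ∃ φ : arith.Formula (Fin 1), ∀ y : M, φ.Realize ![y] ↔ y = a

/-- The set of elements of `M` definable without parameters (the domain of the
prime elementary submodel, when it exists). -/
def dcl0 (M : Type*) [arith.Structure M] : Set M :=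
  { a | ∃ φ : arith.Formula (Fin 1), ∀ y : M, φ.Realize ![y] ↔ y = a }

end MDefs

section Pairs

variable {M : Type*} [arith.Structure M]

/-- For an elementary substructure `K ≼ M` and `X ⊆ M`: the expanded structure
`(K, X ∩ K)` is an elementary substructure of `(M, X)`. -/
def ElemPairSub (K : arith.ElementarySubstructure M) (X : Set M) : Prop :=
  ∀ (n : ℕ) (φ : xArith.Formula (Fin n)) (v : Fin n → K),
    @Formula.Realize xArith K (withX (Subtype.val ⁻¹' X)) (Fin n) φ v ↔
      @Formula.Realize xArith M (withX X) (Fin n) φ (fun i => (v i : M))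

/-- `(M, X) ≼ (N, Y)` along the map `f : M → N`:  `f` is elementary for the language
of arithmetic with an extra unary predicate, interpreted as `X` in `M` and `Y` in `N`. -/
def ElemPairEmb {N : Type*} [arith.Structure N] (f : M → N) (X : Set M) (Y : Set N) : Prop :=
  ∀ (n : ℕ) (φ : xArith.Formula (Fin n)) (v : Fin n → M),
    @Formula.Realize xArith M (withX X) (Fin n) φ v ↔
      @Formula.Realize xArith N (withX Y) (Fin n) φ (f ∘ v)

/-- An elementary embedding `f : M → N` is cofinal. -/
def Cofinal {N : Type*} [arith.Structure N] (f : M ↪ₑ[arith] N) : Prop :=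
  ∀ b : N, ∃ a : M, mle b (f a)

/-- An elementary embedding `f : M → N` is an end extension: every new element lies
above every element of (the image of) `M`. -/
def EndExt {N : Type*} [arith.Structure N] (f : M ↪ₑ[arith] N) : Prop :=
  ∀ b : N, b ∉ Set.range f → ∀ a : M, mlt (f a) b

/-- An elementary extension `f : M → N` is superminimal: every element of `N ∖ M`
generates all of `N` by definable closure. -/
def Superminimal {N : Type*} [arith.Structure N] (f : M ↪ₑ[arith] N) : Prop :=
  ∀ a : N, a ∉ Set.range f → ∀ b : N, b ∈ dcl arith a

end Pairs

section Coding

variable {M : Type*} [arith.Structure M]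

/-- `c` codes the (Cantor) pair `⟨a, b⟩`:  `2c = (a+b)(a+b+1) + 2a`. -/
def IsPair (c a b : M) : Prop :=
  madd c c = madd (mmul (madd a b) (madd (madd a b) m1)) (madd a a)

/-- `r` is the remainder of `a` modulo `m`. -/
def MMod (a m r : M) : Prop := mlt r m ∧ ∃ q : M, a = madd (mmul q m) r

/-- Gödel's β-function (as a relation): `β(c, i) = r`. -/
def Beta (c i r : M) : Prop :=
  ∃ a b : M, IsPair c a b ∧ MMod a (madd m1 (mmul (madd i m1) b)) r

/-- `s` is a coded sequence of length `l` (i.e. `s = ⟨c, l⟩` for some `c`). -/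
def SeqLen (s l : M) : Prop := ∃ c : M, IsPair s c l

/-- `e` is the `i`-th entry of the coded sequence `s`. -/
def Ent (s i e : M) : Prop := ∃ c l : M, IsPair s c l ∧ mlt i l ∧ Beta c i e

end Coding

section Generic

variable {M : Type*} [arith.Structure M]

/-- `p` is a condition of arithmetic Cohen forcing: a coded finite binary sequence. -/
def IsCond (p : M) : Prop :=
  ∃ c l : M, IsPair p c l ∧ ∀ i : M, mlt i l → (Beta c i m0 ∨ Beta c i m1)

/-- The condition `q` extends the condition `p`. -/
def CondExt (q p : M) : Prop :=
  IsCond q ∧ IsCond p ∧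
    ∃ cq lq cp lp : M, IsPair q cq lq ∧ IsPair p cp lp ∧ mle lp lq ∧
      ∀ i : M, mlt i lp → ∀ r : M, Beta cp i r ↔ Beta cq i r

/-- The condition `p` asserts that the bit at position `x` is `1`. -/
def BitOne (p x : M) : Prop :=
  ∃ c l : M, IsPair p c l ∧ mlt x l ∧ Beta c x m1

/-- `X ⊆ M` is generic: it is the union of a filter of coded finite binary sequences
meeting every dense definable subset of the forcing poset. -/
def GenericSet (X : Set M) : Prop :=
  ∃ G : Set M,
    (∀ p ∈ G, IsCond p) ∧
    (∀ p ∈ G, ∀ q : M, IsCond q → CondExt p q → q ∈ G) ∧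
    (∀ p ∈ G, ∀ q ∈ G, ∃ r ∈ G, CondExt r p ∧ CondExt r q) ∧
    (∀ D : Set M, (∀ d ∈ D, IsCond d) → DefinableP arith D →
      (∀ p : M, IsCond p → ∃ q ∈ D, CondExt q p) → ∃ q ∈ G, q ∈ D) ∧
    X = { x | ∃ p ∈ G, BitOne p x }

end Generic

section Encodings

/-- An explicit encoding of the arithmetic function symbols. -/
def arithFuncCode : (Σ n, ArithFunc n) → Fin 4
  | ⟨_, ArithFunc.zero⟩ => 0
  | ⟨_, ArithFunc.one⟩ => 1
  | ⟨_, ArithFunc.add⟩ => 2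
  | ⟨_, ArithFunc.mul⟩ => 3

def arithFuncDecode : Fin 4 → Σ n, ArithFunc n :=
  ![⟨0, ArithFunc.zero⟩, ⟨0, ArithFunc.one⟩, ⟨2, ArithFunc.add⟩, ⟨2, ArithFunc.mul⟩]

instance : Encodable (Σ n, ArithFunc n) :=
  Encodable.ofLeftInverse arithFuncCode arithFuncDecode (by rintro ⟨_, f⟩ <;> cases f <;> rfl)

instance : Encodable (Σ n, ArithRel n) :=
  Encodable.ofLeftInverse (fun _ => (0 : Fin 1)) (fun _ => ⟨2, ArithRel.lt⟩)
    (by rintro ⟨_, r⟩; cases r; rfl)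

instance instEncArithFunc : Encodable (Σ n, arith.Functions n) :=
  (inferInstance : Encodable (Σ n, ArithFunc n))

instance instEncSigmaBF {α : Type} [Encodable α] :
    Encodable (Σ n, arith.BoundedFormula α n) :=
  Encodable.ofLeftInjection (fun φ => φ.2.listEncode)
    (fun l => (BoundedFormula.listDecode l)[0]?)
    fun φ => BoundedFormula.encoding.decode_encode φ

instance instEncFormula {α : Type} [Encodable α] : Encodable (arith.Formula α) :=
  Encodable.ofLeftInjection (fun φ => (⟨0, φ⟩ : Σ n, arith.BoundedFormula α n))
    (fun ψ => match ψ with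
      | ⟨0, ψ⟩ => some ψ
      | _ => none)
    fun _ => rfl

/-- A set of formulas is recursive when its set of codes is computable. -/
def IsRecursive {α : Type} [Encodable α] (p : Set α) : Prop :=
  ComputablePred fun k : ℕ => ∃ x ∈ p, Encodable.encode x = k

end Encodings

section RecSat

variable (M : Type*) [arith.Structure M]

/-- The formula `x < y` where `x` is the `Sum.inr` variable and `y` is the `i`-th
`Sum.inl` variable; used to express that a type contains a formula `x < b`. -/
def ltParamFml {n : ℕ} (i : Fin n) : arith.Formula (Fin n ⊕ Fin 1) :=
  Relations.formula (ArithRel.lt : arith.Relations 2)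
    ![Term.var (Sum.inr 0), Term.var (Sum.inl i)]

/-- `M` is recursively saturated: every recursive type over finitely many parameters
of `M`, in one free variable, that is finitely realized in `M` is realized in `M`. -/
def RecSat : Prop :=
  ∀ (n : ℕ) (p : Set (arith.Formula (Fin n ⊕ Fin 1))) (v : Fin n → M),
    IsRecursive p →
    (∀ fs : Finset (arith.Formula (Fin n ⊕ Fin 1)), ↑fs ⊆ p →
      ∃ a : M, ∀ φ ∈ fs, Formula.Realize φ (Sum.elim v ![a])) →
    ∃ a : M, ∀ φ ∈ p, Formula.Realize φ (Sum.elim v ![a])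

/-- `M` is short recursively saturated: every recursive type over finitely many
parameters of `M` that contains a formula `x < b` for some parameter `b` and is
finitely realized in `M` is realized in `M`. -/
def ShortRecSat : Prop :=
  ∀ (n : ℕ) (p : Set (arith.Formula (Fin n ⊕ Fin 1))) (v : Fin n → M),
    IsRecursive p →
    (∃ i : Fin n, ltParamFml i ∈ p) →
    (∀ fs : Finset (arith.Formula (Fin n ⊕ Fin 1)), ↑fs ⊆ p →
      ∃ a : M, ∀ φ ∈ fs, Formula.Realize φ (Sum.elim v ![a])) →
    ∃ a : M, ∀ φ ∈ p, Formula.Realize φ (Sum.elim v ![a])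

end RecSat

section SatClass

variable {M : Type*} [arith.Structure M]

/-- `e` codes the tagged node `⟨t, a, b⟩` (a node of a syntax tree). -/
def Node (e t a b : M) : Prop := ∃ d : M, IsPair e t d ∧ IsPair d a b

/-- Internal syntax of terms (tags: `0` = variable, `1` = the constant `0`,
`2` = the constant `1`, `3` = addition, `4` = multiplication):
admissibility of an entry of a construction sequence. -/
def TermEnt (s i e : M) : Prop :=
  (∃ k : M, Node e (num 0) k m0) ∨ Node e (num 1) m0 m0 ∨ Node e (num 2) m0 m0 ∨
    (∃ a b j j' : M, mlt j i ∧ mlt j' i ∧ Ent s j a ∧ Ent s j' b ∧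
      (Node e (num 3) a b ∨ Node e (num 4) a b))

/-- `t` is a term in the sense of `M`. -/
def IsTerm (t : M) : Prop :=
  ∃ s : M, (∃ i : M, Ent s i t) ∧ ∀ i e : M, Ent s i e → TermEnt s i e

/-- The valuation `v` (a coded sequence) assigns the value `r` to the variable `k`. -/
def ValAt (v k r : M) : Prop := Ent v k r

/-- Admissibility of an entry of a term-evaluation sequence: entries are pairs
`⟨term, value⟩`, evaluated under the valuation `v`. -/
def TValEnt (v s i e : M) : Prop :=
  ∃ te re : M, IsPair e te re ∧
    ((∃ k : M, Node te (num 0) k m0 ∧ ValAt v k re) ∨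
      (Node te (num 1) m0 m0 ∧ re = m0) ∨
      (Node te (num 2) m0 m0 ∧ re = m1) ∨
      (∃ a b ra rb j j' pa pb : M, mlt j i ∧ mlt j' i ∧ Ent s j pa ∧ Ent s j' pb ∧
        IsPair pa a ra ∧ IsPair pb b rb ∧
        ((Node te (num 3) a b ∧ re = madd ra rb) ∨ (Node te (num 4) a b ∧ re = mmul ra rb))))

/-- The term (code) `t` has value `r` under the valuation `v`. -/
def TermVal (v t r : M) : Prop :=
  ∃ s : M, (∃ i e : M, Ent s i e ∧ IsPair e t r) ∧ ∀ i e : M, Ent s i e → TValEnt v s i e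

/-- Internal syntax of formulas (tags: `5` = `⊥`, `6` = `=`, `7` = `<`, `8` = `→`,
`9` = universal quantification binding the named variable in the first component):
admissibility of an entry of a construction sequence. -/
def FmlaEnt (s i e : M) : Prop :=
  Node e (num 5) m0 m0 ∨
    (∃ t u : M, (Node e (num 6) t u ∨ Node e (num 7) t u) ∧ IsTerm t ∧ IsTerm u) ∨
    (∃ a b j j' : M, mlt j i ∧ mlt j' i ∧ Ent s j a ∧ Ent s j' b ∧ Node e (num 8) a b) ∨
    (∃ k a j : M, mlt j i ∧ Ent s j a ∧ Node e (num 9) k a)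

/-- `f` is a formula in the sense of `M`. -/
def IsFmla (f : M) : Prop :=
  ∃ s : M, (∃ i : M, Ent s i f) ∧ ∀ i e : M, Ent s i e → FmlaEnt s i e

/-- `v'` is the valuation `v` modified so that variable `k` takes the value `a`. -/
def VMod (v k a v' : M) : Prop :=
  ValAt v' k a ∧ ∀ m r : M, m ≠ k → (ValAt v m r ↔ ValAt v' m r)

/-- The code (relative to a map `nm` giving the name of each variable) of a term
of the language of arithmetic. -/
def GTerm {β : Type*} (nm : β → M) : arith.Term β → M → Prop
  | Term.var b, e => Node e (num 0) (nm b) m0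
  | Term.func f ts, e =>
    match f, ts with
    | ArithFunc.zero, _ => Node e (num 1) m0 m0
    | ArithFunc.one, _ => Node e (num 2) m0 m0
    | ArithFunc.add, ts => ∃ a b : M, GTerm nm (ts 0) a ∧ GTerm nm (ts 1) b ∧ Node e (num 3) a b
    | ArithFunc.mul, ts => ∃ a b : M, GTerm nm (ts 0) a ∧ GTerm nm (ts 1) b ∧ Node e (num 4) a b

/-- The code of a formula of arithmetic with free variables among `Fin k`
(free variable `i` is named `i`; the variable bound at quantifier depth `j` is
named `k + j`). -/
def GFmla {k : ℕ} : ∀ {n : ℕ}, arith.BoundedFormula (Fin k) n → M → Prop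
  | n, BoundedFormula.falsum, e => Node e (num 5) m0 m0
  | n, BoundedFormula.equal t u, e =>
    ∃ a b : M, GTerm (Sum.elim (fun i : Fin k => num i) fun j : Fin n => num (k + j)) t a ∧
      GTerm (Sum.elim (fun i : Fin k => num i) fun j : Fin n => num (k + j)) u b ∧
      Node e (num 6) a b
  | n, BoundedFormula.rel R ts, e =>
    match R, ts with
    | ArithRel.lt, ts =>
      ∃ a b : M, GTerm (Sum.elim (fun i : Fin k => num i) fun j : Fin n => num (k + j)) (ts 0) a ∧
        GTerm (Sum.elim (fun i : Fin k => num i) fun j : Fin n => num (k + j)) (ts 1) b ∧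
        Node e (num 7) a b
  | _, BoundedFormula.imp f g, e => ∃ a b : M, GFmla f a ∧ GFmla g b ∧ Node e (num 8) a b
  | n, BoundedFormula.all f, e => ∃ a : M, GFmla f a ∧ Node e (num 9) (num (k + n)) a

/-- `S` is a full satisfaction class for `M`:  `S` is a set of (codes of) pairs
`⟨φ, v⟩` of `M`-formulas and `M`-valuations satisfying Tarski's compositional
conditions for all formulas in the sense of `M` — including nonstandard ones — and
agreeing with actual satisfaction on standard formulas. -/
def FullSatClass (S : Set M) : Prop :=
  (∀ x ∈ S, ∃ f v : M, IsPair x f v ∧ IsFmla f) ∧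
    (∀ e t u v x : M, Node e (num 6) t u → IsTerm t → IsTerm u → IsPair x e v →
      (x ∈ S ↔ ∃ r : M, TermVal v t r ∧ TermVal v u r)) ∧
    (∀ e t u v x : M, Node e (num 7) t u → IsTerm t → IsTerm u → IsPair x e v →
      (x ∈ S ↔ ∃ r r' : M, TermVal v t r ∧ TermVal v u r' ∧ mlt r r')) ∧
    (∀ e v x : M, Node e (num 5) m0 m0 → IsPair x e v → x ∉ S) ∧
    (∀ e f g v x xf xg : M, Node e (num 8) f g → IsFmla f → IsFmla g →
      IsPair x e v → IsPair xf f v → IsPair xg g v →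
      (x ∈ S ↔ (xf ∈ S → xg ∈ S))) ∧
    (∀ e k f v x : M, Node e (num 9) k f → IsFmla f → IsPair x e v →
      (x ∈ S ↔ ∀ a v' x' : M, VMod v k a v' → IsPair x' f v' → x' ∈ S)) ∧
    (∀ (k : ℕ) (φ : arith.Formula (Fin k)) (w : Fin k → M) (e v x : M),
      GFmla φ e → (∀ i : Fin k, ValAt v (num i) (w i)) → IsPair x e v →
      (x ∈ S ↔ φ.Realize w))

end SatClass


/-- `X` is `A`-neutral: for all `a, b ∈ A`, `a ∈ dcl(b)` iff `a ∈ dcl^{(M,X)}(b)`. -/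
def ANeutral {M : Type*} [arith.Structure M] (A X : Set M) : Prop :=
  ∀ a ∈ A, ∀ b ∈ A, (a ∈ dcl arith b ↔ a ∈ dclX X b)


/-! For `a = f a₀` in the image of `M`, elementarity of `f` and of `(M, X) ≼ (N, Y)` identifies
`dcl(a)` and `dcl^{(N,Y)}(a)` with the images of `dcl(a₀)` and `dcl^{(M,X)}(a₀)`, which agree by
neutrality of `X`. For `a ∉ M`, superminimality makes `dcl(a)` all of `N`. -/

section Dcl

variable {L : Language}

noncomputable def existsSnd (φ : L.Formula (Fin 2)) : L.Formula (Fin 1) :=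
  (φ.relabel ![Sum.inl 0, Sum.inr 0]).iExs (Fin 1)

theorem realize_existsSnd {M : Type*} [L.Structure M] (φ : L.Formula (Fin 2)) (a : M) :
    (existsSnd φ).Realize ![a] ↔ ∃ y, φ.Realize ![a, y] := by
  have hval : ∀ y : Fin 1 → M,
      Sum.elim ![a] y ∘ ![Sum.inl 0, Sum.inr 0] = ![a, y 0] := fun y => by
    funext j; fin_cases j <;> rfl
  simp only [existsSnd, Formula.realize_iExs, Formula.realize_relabel, hval]
  exact ⟨fun ⟨y, hy⟩ => ⟨y 0, hy⟩, fun ⟨y, hy⟩ => ⟨fun _ => y, hy⟩⟩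

noncomputable def definesUniquely (φ : L.Formula (Fin 2)) : L.Formula (Fin 2) :=
  (((φ.relabel ![0, 2]).iff ((Term.var 2).equal (Term.var 1))).relabel
    ![Sum.inl 0, Sum.inl 1, Sum.inr 0]).iAlls (Fin 1)

theorem realize_definesUniquely {M : Type*} [L.Structure M] (φ : L.Formula (Fin 2))
    (a b : M) : (definesUniquely φ).Realize ![a, b] ↔ ∀ y, φ.Realize ![a, y] ↔ y = b := by
  have hval : ∀ y : Fin 1 → M,
      Sum.elim ![a, b] y ∘ ![Sum.inl 0, Sum.inl 1, Sum.inr 0] = ![a, b, y 0] := fun y => by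
    funext j; fin_cases j <;> rfl
  have hval' : ∀ y : M, ![a, b, y] ∘ ![0, 2] = ![a, y] := fun y => by
    funext j; fin_cases j <;> rfl
  simp only [definesUniquely, Formula.realize_iAlls, Formula.realize_relabel, hval,
    Formula.realize_iff, hval', Formula.realize_equal, Term.realize_var]
  exact ⟨fun h y => h fun _ => y, fun h y => h (y 0)⟩

theorem dcl_map {M N : Type*} [L.Structure M] [L.Structure N] (g : M ↪ₑ[L] N) (a : M) :
    dcl L (g a) = g '' dcl L a := by
  have hcomp : ∀ x y : M, g ∘ ![x, y] = ![g x, g y] := fun x y => by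
    funext j; fin_cases j <;> rfl
  ext b
  constructor
  · rintro ⟨φ, hφ⟩
    have hex : (existsSnd φ).Realize ![a] := by
      rw [← g.map_formula, show g ∘ ![a] = ![g a] from by funext j; fin_cases j; rfl,
        realize_existsSnd]
      exact ⟨b, (hφ b).2 rfl⟩
    obtain ⟨b₀, hb₀⟩ := (realize_existsSnd φ a).1 hex
    have hφ₀ : ∀ y, φ.Realize ![a, y] ↔ g y = b := fun y => by
      rw [← hφ, ← hcomp, g.map_formula]
    refine ⟨b₀, ⟨φ, fun y => ?_⟩, (hφ₀ b₀).1 hb₀⟩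
    rw [hφ₀, ← (hφ₀ b₀).1 hb₀, g.injective.eq_iff]
  · rintro ⟨b₀, ⟨ψ, hψ⟩, rfl⟩
    refine ⟨ψ, (realize_definesUniquely ψ (g a) (g b₀)).1 ?_⟩
    rw [← hcomp, g.map_formula, realize_definesUniquely]
    exact hψ

end Dcl

section Neutral

variable {M : Type*} [arith.Structure M]

theorem dcl_subset_dclX (X : Set M) (a : M) : dcl arith a ⊆ dclX X a := by
  let := withX X
  have : LHom.IsExpansionOn (LHom.sumInl : arith →ᴸ xArith) M :=
    { map_onFunction := fun _ _ => rfl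
      map_onRelation := fun _ _ => rfl }
  rintro b ⟨φ, hφ⟩
  exact ⟨LHom.sumInl.onFormula φ, fun y => (LHom.realize_onFormula _ φ).trans (hφ y)⟩

theorem neutral_iff_dclX_subset_dcl {X : Set M} :
    Neutral X ↔ ∀ a, dclX X a ⊆ dcl arith a :=
  ⟨fun h a => (h a).symm.subset,
    fun h a => (dcl_subset_dclX X a).antisymm (h a)⟩

def ElemPairEmb.toElementaryEmbedding {N : Type*} [arith.Structure N] {f : M → N}
    {X : Set M} {Y : Set N} (h : ElemPairEmb f X Y) :
    @ElementaryEmbedding xArith M N (withX X) (withX Y) :=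
  @ElementaryEmbedding.mk xArith M N (withX X) (withX Y) f fun n φ v => (h n φ v).symm

end Neutral

theorem neutral_of_superminimal_pair_extension_general
    {M N : Type*} [arith.Structure M] [arith.Structure N]
    (X : Set M) (hXneu : Neutral X)
    (f : M ↪ₑ[arith] N) (hsm : Superminimal f)
    (Y : Set N) (hXY : ElemPairEmb f.toFun X Y) :
    Neutral Y := by
  refine neutral_iff_dclX_subset_dcl.2 fun a b hb => ?_
  by_cases ha : a ∈ Set.range f
  · obtain ⟨a₀, rfl⟩ := ha
    have hdclX : dclX Y (f a₀) = f '' dclX X a₀ :=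
      @dcl_map xArith M N (withX X) (withX Y) hXY.toElementaryEmbedding a₀
    rw [dcl_map, hXneu]
    rwa [hdclX] at hb
  · exact hsm a ha b

/-- If `X` is a neutral subset of a model `M` of PA, `N` is a
superminimal elementary extension of `M`, and `Y ⊆ N` is such that
`(M, X) ≼ (N, Y)`, then `Y` is a neutral subset of `N`. -/
theorem neutral_of_superminimal_pair_extension
    {M N : Type*} [arith.Structure M] [arith.Structure N]
    (hM : ModelOf arith M paT) (X : Set M) (hXneu : Neutral X)
    (f : M ↪ₑ[arith] N) (hsm : Superminimal f)
    (Y : Set N) (hXY : ElemPairEmb f.toFun X Y) :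
    Neutral Y :=
  neutral_of_superminimal_pair_extension_general X hXneu f hsm Y hXY

end NeutralPA
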